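/- arXiv:1902.06144 — 2 statements merged into one kernel-verified Lean document; each statement's English description precedes it below -/
import Mathlib

section
/- For the generalized Gaussian family with β even, the Fisher information matrix entry g₂₂ = −E[∂²_σσ log f] equals β/σ². -/
open MeasureTheory

/-- The generalized Gaussian density. -/
noncomputable def genGaussPdf (β : ℕ) (μ σ x : ℝ) : ℝ :=
  (β : ℝ) / (2 * σ * Real.Gamma (1 / (β : ℝ))) * Real.exp (-(x - μ) ^ β / σ ^ β)

/-- The log-likelihood `l = log f`. -/
noncomputable def genGaussLogLik (β : ℕ) (μ σ x : ℝ) : ℝ :=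
  Real.log (genGaussPdf β μ σ x)

/-!
For `s > 0` the log-likelihood is `log (β / (2 Γ(1/β))) - log s - (x - μ)^β s^(-β)`, so
`∂²_σ l = σ^(-2) - β (β + 1) (x - μ)^β σ^(-β-2)`. Since `β` is even, the moments of the density
are twice half-line integrals, which the substitution `x ↦ x^β` turns into Gamma integrals:
the density integrates to `1` and `E[(X - μ)^β] = σ^β Γ(1/β + 1) / Γ(1/β) = σ^β / β`.
Hence `-E[∂²_σ l] = -σ^(-2) + (β + 1) σ^(-2) = β / σ^2`.
-/

open Real Set

theorem MeasureTheory.IntegrableOn.integrable_of_even {E : Type*} [NormedAddCommGroup E]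
    {f : ℝ → E} (heven : ∀ x, f (-x) = f x) (hf : IntegrableOn f (Ioi 0)) : Integrable f := by
  rw [← integrableOn_univ, ← Iio_union_Ici (a := (0 : ℝ)), integrableOn_union,
    integrableOn_Ici_iff_integrableOn_Ioi]
  refine ⟨?_, hf⟩
  rw [← (Measure.measurePreserving_neg (volume : Measure ℝ)).integrableOn_comp_preimage
      (Homeomorph.neg ℝ).measurableEmbedding]
  simpa only [Function.comp_def, heven, neg_preimage, neg_Iio, neg_zero] using hf

section PowMulExp

variable {q β : ℕ} {σ : ℝ}

lemma pow_mul_exp_neg_pow_div_pow_eq_rpow (x : ℝ) :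
    x ^ q * exp (-x ^ β / σ ^ β) = x ^ (q : ℝ) * exp (-(σ ^ β)⁻¹ * x ^ (β : ℝ)) := by
  rw [rpow_natCast, rpow_natCast]
  ring_nf

lemma integrableOn_pow_mul_exp_neg_pow_div_pow_Ioi (hβ : 0 < β) (hσ : 0 < σ) :
    IntegrableOn (fun x : ℝ => x ^ q * exp (-x ^ β / σ ^ β)) (Ioi 0) := by
  simp_rw [pow_mul_exp_neg_pow_div_pow_eq_rpow]
  exact integrableOn_rpow_mul_exp_neg_mul_rpow (by linarith [q.cast_nonneg (α := ℝ)])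
    (by exact_mod_cast hβ) (by positivity)

lemma integral_pow_mul_exp_neg_pow_div_pow_Ioi (hβ : 0 < β) (hσ : 0 < σ) :
    ∫ x in Ioi (0 : ℝ), x ^ q * exp (-x ^ β / σ ^ β)
      = σ ^ (q + 1) / β * Gamma ((q + 1) / β) := by
  simp_rw [pow_mul_exp_neg_pow_div_pow_eq_rpow]
  rw [integral_rpow_mul_exp_neg_mul_rpow (by exact_mod_cast hβ)
    (by linarith [q.cast_nonneg (α := ℝ)]) (by positivity)]
  have hβ' : (β : ℝ) ≠ 0 := by positivity
  rw [← rpow_neg_one, ← rpow_natCast, ← rpow_mul hσ.le, ← rpow_mul hσ.le,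
    show (β : ℝ) * -1 * (-(q + 1) / β) = ((q + 1 : ℕ) : ℝ) by push_cast; field_simp, rpow_natCast]
  ring

lemma integrable_pow_mul_exp_neg_pow_div_pow (hq : Even q) (hβe : Even β) (hβ : 0 < β)
    (hσ : 0 < σ) : Integrable fun x : ℝ => x ^ q * exp (-x ^ β / σ ^ β) :=
  (integrableOn_pow_mul_exp_neg_pow_div_pow_Ioi hβ hσ).integrable_of_even fun x => by
    rw [hq.neg_pow, hβe.neg_pow]

lemma integral_pow_mul_exp_neg_pow_div_pow (hq : Even q) (hβe : Even β) (hβ : 0 < β)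
    (hσ : 0 < σ) :
    ∫ x : ℝ, x ^ q * exp (-x ^ β / σ ^ β) = 2 * (σ ^ (q + 1) / β * Gamma ((q + 1) / β)) := by
  rw [← integral_pow_mul_exp_neg_pow_div_pow_Ioi hβ hσ, ← integral_comp_abs]
  simp only [hq.pow_abs, hβe.pow_abs]

end PowMulExp

section Moments

variable {q β : ℕ} {σ : ℝ}

lemma centered_pow_mul_genGaussPdf (μ x : ℝ) :
    (x - μ) ^ q * genGaussPdf β μ σ x
      = β / (2 * σ * Gamma (1 / β)) * ((x - μ) ^ q * exp (-(x - μ) ^ β / σ ^ β)) := by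
  unfold genGaussPdf
  ring

lemma integrable_centered_pow_mul_genGaussPdf (hq : Even q) (hβe : Even β) (hβ : 0 < β)
    (hσ : 0 < σ) (μ : ℝ) : Integrable fun x => (x - μ) ^ q * genGaussPdf β μ σ x := by
  simp_rw [centered_pow_mul_genGaussPdf]
  exact ((integrable_pow_mul_exp_neg_pow_div_pow hq hβe hβ hσ).comp_sub_right μ).const_mul _

lemma integral_centered_pow_mul_genGaussPdf (hq : Even q) (hβe : Even β) (hβ : 0 < β)
    (hσ : 0 < σ) (μ : ℝ) :
    ∫ x, (x - μ) ^ q * genGaussPdf β μ σ x = σ ^ q * Gamma ((q + 1) / β) / Gamma (1 / β) := by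
  simp_rw [centered_pow_mul_genGaussPdf]
  rw [integral_const_mul,
    integral_sub_right_eq_self (fun x => x ^ q * exp (-x ^ β / σ ^ β)) μ,
    integral_pow_mul_exp_neg_pow_div_pow hq hβe hβ hσ]
  have : Gamma (1 / β) ≠ 0 := (Gamma_pos_of_pos (by positivity)).ne'
  field_simp
  ring

lemma integrable_genGaussPdf (hβe : Even β) (hβ : 0 < β) (hσ : 0 < σ) (μ : ℝ) :
    Integrable fun x => genGaussPdf β μ σ x := by
  simpa only [pow_zero, one_mul] using
    integrable_centered_pow_mul_genGaussPdf Even.zero hβe hβ hσ μ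

lemma integral_genGaussPdf (hβe : Even β) (hβ : 0 < β) (hσ : 0 < σ) (μ : ℝ) :
    ∫ x, genGaussPdf β μ σ x = 1 := by
  simpa only [pow_zero, one_mul, Nat.cast_zero, zero_add,
    div_self (Gamma_pos_of_pos (by positivity : (0 : ℝ) < 1 / β)).ne'] using
    integral_centered_pow_mul_genGaussPdf Even.zero hβe hβ hσ μ

lemma integral_centered_pow_self_mul_genGaussPdf (hβe : Even β) (hβ : 0 < β) (hσ : 0 < σ)
    (μ : ℝ) : ∫ x, (x - μ) ^ β * genGaussPdf β μ σ x = σ ^ β / β := by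
  have hβ' : (β : ℝ) ≠ 0 := by positivity
  rw [integral_centered_pow_mul_genGaussPdf hβe hβe hβ hσ,
    show ((β : ℝ) + 1) / β = 1 / β + 1 by field_simp; ring, Gamma_add_one (by positivity)]
  have : Gamma (1 / β) ≠ 0 := (Gamma_pos_of_pos (by positivity)).ne'
  field_simp

end Moments

lemma hasDerivAt_inv_pow (n : ℕ) {s : ℝ} (hs : s ≠ 0) :
    HasDerivAt (fun t : ℝ => (t ^ n)⁻¹) (-n * (s ^ (n + 1))⁻¹) s := by
  have h : HasDerivAt (fun t : ℝ => (t ^ n)⁻¹) _ s := (hasDerivAt_pow n s).inv (pow_ne_zero n hs)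
  convert h using 1
  rcases n with _ | n
  · simp
  · rw [Nat.add_sub_cancel]
    field_simp
    ring

section ScaleDerivatives

variable {β : ℕ} {μ x s : ℝ}

lemma genGaussLogLik_eq (hβ : 0 < β) (hs : 0 < s) :
    genGaussLogLik β μ s x
      = log (β / (2 * Gamma (1 / β))) - log s - (x - μ) ^ β * (s ^ β)⁻¹ := by
  have : 0 < Gamma (1 / β) := Gamma_pos_of_pos (by positivity)
  rw [genGaussLogLik, genGaussPdf, log_mul (by positivity) (exp_ne_zero _), log_exp,
    show (β : ℝ) / (2 * s * Gamma (1 / β)) = β / (2 * Gamma (1 / β)) * s⁻¹ by ring,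
    log_mul (by positivity) (by positivity), log_inv]
  ring

lemma hasDerivAt_genGaussLogLik_scale (hβ : 0 < β) (hs : 0 < s) :
    HasDerivAt (fun s => genGaussLogLik β μ s x)
      (-s⁻¹ + β * (x - μ) ^ β * (s ^ (β + 1))⁻¹) s := by
  have hderiv := ((hasDerivAt_const s (log (β / (2 * Gamma (1 / β))))).sub
    (hasDerivAt_log hs.ne')).sub ((hasDerivAt_inv_pow β hs.ne').const_mul ((x - μ) ^ β))
  refine (hderiv.congr_of_eventuallyEq ?_).congr_deriv (by ring)
  filter_upwards [Ioi_mem_nhds hs] with t ht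
  exact genGaussLogLik_eq hβ ht

lemma deriv_deriv_genGaussLogLik_scale (hβ : 0 < β) (hs : 0 < s) :
    deriv (fun s => deriv (fun s' => genGaussLogLik β μ s' x) s) s
      = (s ^ 2)⁻¹ - β * (β + 1) * (x - μ) ^ β * (s ^ (β + 2))⁻¹ := by
  have hderiv := (hasDerivAt_inv hs.ne').neg.add
    ((hasDerivAt_inv_pow (β + 1) hs.ne').const_mul (β * (x - μ) ^ β))
  refine (hderiv.congr_of_eventuallyEq ?_).deriv.trans ?_
  · filter_upwards [Ioi_mem_nhds hs] with t ht
    exact (hasDerivAt_genGaussLogLik_scale hβ ht).deriv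
  · push_cast
    ring

end ScaleDerivatives

theorem generalized_gaussian_fisher_g22
    (β : ℕ) (hβeven : Even β) (hβpos : 0 < β) (μ σ : ℝ) (hσ : 0 < σ) :
    -∫ x : ℝ, (deriv (fun s => deriv (fun s' => genGaussLogLik β μ s' x) s) σ)
        * genGaussPdf β μ σ x
      = (β : ℝ) / σ ^ 2 := by
  have hintegrand : ∀ x, deriv (fun s => deriv (fun s' => genGaussLogLik β μ s' x) s) σ
        * genGaussPdf β μ σ x
      = (σ ^ 2)⁻¹ * genGaussPdf β μ σ x
        - β * (β + 1) * (σ ^ (β + 2))⁻¹ * ((x - μ) ^ β * genGaussPdf β μ σ x) := fun x => by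
    rw [deriv_deriv_genGaussLogLik_scale hβpos hσ]
    ring
  simp_rw [hintegrand]
  rw [integral_sub ((integrable_genGaussPdf hβeven hβpos hσ μ).const_mul _)
      ((integrable_centered_pow_mul_genGaussPdf hβeven hβeven hβpos hσ μ).const_mul _),
    integral_const_mul, integral_const_mul, integral_genGaussPdf hβeven hβpos hσ,
    integral_centered_pow_self_mul_genGaussPdf hβeven hβpos hσ]
  have hβ' : (β : ℝ) ≠ 0 := by positivity
  field_simp
  ring
end

section
/- For the generalized Gaussian family with β even, the skewness tensor component T₂₂₂ = E[(∂_σ l)³] equals 2β²/σ³. -/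
open MeasureTheory

/-!
With `Z = (X - μ)^β / σ^β` the score is `∂_σ l = (β Z - 1) / σ`, and for even `β` the substitution
`x ↦ |x - μ|` turns the moments of `Z` into Gamma integrals:
`E[Z^k] = Γ(k + 1/β) / Γ(1/β) = a (a + 1) ⋯ (a + k - 1)` with `a = 1/β`. Expanding the cube,
`σ³ T₂₂₂ = β³ a(a+1)(a+2) - 3β² a(a+1) + 3β a - 1 = (1 + β)(1 + 2β) - 3(1 + β) + 3 - 1 = 2β²`.
-/

open Real Set

theorem integrable_comp_abs_of_integrableOn_Ioi {E : Type*} [NormedAddCommGroup E] {f : ℝ → E}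
    (hf : IntegrableOn f (Ioi 0)) : Integrable fun x => f |x| := by
  have hIoi : IntegrableOn (fun x => f |x|) (Ioi 0) :=
    hf.congr_fun (fun x hx => by rw [abs_of_pos hx]) measurableSet_Ioi
  have hIic : IntegrableOn (fun x => f |x|) (Iic 0) := by
    have hneg : MeasurableEmbedding fun x : ℝ => -x := (Homeomorph.neg ℝ).measurableEmbedding
    rw [← Measure.map_neg_eq_self (volume : Measure ℝ), hneg.integrableOn_map_iff]
    simp only [Function.comp_def, abs_neg, neg_preimage, neg_Iic, neg_zero]
    exact (integrableOn_Ici_iff_integrableOn_Ioi).mpr hIoi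
  rw [← integrableOn_univ, ← Iic_union_Ioi (a := (0 : ℝ))]
  exact hIic.union hIoi

theorem Gamma_natCast_succ_add {a : ℝ} (ha : 0 < a) (k : ℕ) :
    Gamma ((k + 1 : ℕ) + a) = (k + a) * Gamma (k + a) := by
  rw [Nat.cast_succ, add_right_comm, Gamma_add_one (by positivity)]

section GeneralizedGaussianMoments

variable {β : ℕ} {σ : ℝ}

theorem pow_mul_exp_neg_pow_div_eq_rpow {n : ℕ} :
    (fun x : ℝ => x ^ n * exp (-x ^ β / σ ^ β))
      = fun x : ℝ => x ^ (n : ℝ) * exp (-(σ ^ β)⁻¹ * x ^ (β : ℝ)) := by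
  ext x
  rw [rpow_natCast, rpow_natCast, neg_div, div_eq_inv_mul, neg_mul]

theorem integrableOn_Ioi_pow_mul_exp_neg_pow_div (n : ℕ) (hβ : 0 < β) (hσ : 0 < σ) :
    IntegrableOn (fun x : ℝ => x ^ n * exp (-x ^ β / σ ^ β)) (Ioi 0) := by
  rw [pow_mul_exp_neg_pow_div_eq_rpow]
  exact integrableOn_rpow_mul_exp_neg_mul_rpow (by linarith [n.cast_nonneg (α := ℝ)])
    (by exact_mod_cast hβ) (by positivity)

theorem integral_Ioi_pow_mul_exp_neg_pow_div (n : ℕ) (hβ : 0 < β) (hσ : 0 < σ) :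
    ∫ x in Ioi 0, x ^ n * exp (-x ^ β / σ ^ β) = σ ^ (n + 1) / β * Gamma ((n + 1) / β) := by
  have hβ' : (β : ℝ) ≠ 0 := by positivity
  rw [pow_mul_exp_neg_pow_div_eq_rpow, integral_rpow_mul_exp_neg_mul_rpow
    (by exact_mod_cast hβ) (by linarith [n.cast_nonneg (α := ℝ)]) (by positivity),
    ← rpow_natCast σ β, ← rpow_neg hσ.le, ← rpow_mul hσ.le, ← rpow_natCast σ (n + 1)]
  congr 2
  · field_simp; push_cast; ring
  · ring

theorem integrable_pow_mul_exp_neg_pow_div {n : ℕ} (hn : Even n) (hβ : Even β) (hβpos : 0 < β)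
    (hσ : 0 < σ) : Integrable fun x : ℝ => x ^ n * exp (-x ^ β / σ ^ β) := by
  simpa only [hn.pow_abs, hβ.pow_abs] using
    integrable_comp_abs_of_integrableOn_Ioi (integrableOn_Ioi_pow_mul_exp_neg_pow_div n hβpos hσ)

theorem integral_pow_mul_exp_neg_pow_div {n : ℕ} (hn : Even n) (hβ : Even β) (hβpos : 0 < β)
    (hσ : 0 < σ) :
    ∫ x : ℝ, x ^ n * exp (-x ^ β / σ ^ β) = 2 * σ ^ (n + 1) / β * Gamma ((n + 1) / β) := by
  have h := integral_comp_abs (f := fun x : ℝ => x ^ n * exp (-x ^ β / σ ^ β))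
  simp only [hn.pow_abs, hβ.pow_abs] at h
  rw [h, integral_Ioi_pow_mul_exp_neg_pow_div n hβpos hσ]
  ring

theorem genGaussPdf_pow_mul_eq (β k : ℕ) (μ σ x : ℝ) :
    ((x - μ) ^ β / σ ^ β) ^ k * genGaussPdf β μ σ x
      = β / (2 * σ * Gamma (1 / β)) / σ ^ (k * β)
        * ((x - μ) ^ (k * β) * exp (-(x - μ) ^ β / σ ^ β)) := by
  rw [genGaussPdf, div_pow, ← pow_mul, ← pow_mul, mul_comm β k]
  ring

theorem integrable_pow_mul_genGaussPdf (hβ : Even β) (hβpos : 0 < β) (μ : ℝ) (hσ : 0 < σ)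
    (k : ℕ) : Integrable fun x => ((x - μ) ^ β / σ ^ β) ^ k * genGaussPdf β μ σ x := by
  simp only [genGaussPdf_pow_mul_eq]
  refine Integrable.const_mul ?_ _
  exact (integrable_pow_mul_exp_neg_pow_div (hβ.mul_left k) hβ hβpos hσ).comp_sub_right μ

theorem integral_pow_mul_genGaussPdf (hβ : Even β) (hβpos : 0 < β) (μ : ℝ) (hσ : 0 < σ)
    (k : ℕ) :
    ∫ x, ((x - μ) ^ β / σ ^ β) ^ k * genGaussPdf β μ σ x = Gamma (k + 1 / β) / Gamma (1 / β) := by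
  have hΓ : Gamma (1 / β) ≠ 0 := (Gamma_pos_of_pos (by positivity)).ne'
  simp only [genGaussPdf_pow_mul_eq]
  rw [integral_const_mul, integral_sub_right_eq_self (fun y => y ^ (k * β) * exp (-y ^ β / σ ^ β)),
    integral_pow_mul_exp_neg_pow_div (hβ.mul_left k) hβ hβpos hσ]
  have hβ' : (β : ℝ) ≠ 0 := by positivity
  have harg : ((k * β : ℕ) + 1 : ℝ) / β = k + 1 / β := by push_cast; field_simp
  rw [harg, pow_succ]
  field_simp

end GeneralizedGaussianMoments

theorem hasDerivAt_genGaussLogLik {β : ℕ} (hβ : 0 < β) (μ x : ℝ) {σ : ℝ} (hσ : 0 < σ) :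
    HasDerivAt (fun s => genGaussLogLik β μ s x) ((β * ((x - μ) ^ β / σ ^ β) - 1) / σ) σ := by
  have hΓ : 0 < Gamma (1 / β) := Gamma_pos_of_pos (by positivity)
  set C := log (β / (2 * Gamma (1 / β)))
  have hlog : (fun s => C - log s - (x - μ) ^ β * (s ^ β)⁻¹) =ᶠ[nhds σ]
      fun s => genGaussLogLik β μ s x := by
    filter_upwards [Ioi_mem_nhds hσ] with s (hs : 0 < s)
    rw [genGaussLogLik, genGaussPdf, log_mul (by positivity) (exp_ne_zero _), log_exp,
      show (β : ℝ) / (2 * s * Gamma (1 / β)) = β / (2 * Gamma (1 / β)) * s⁻¹ by field_simp,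
      log_mul (by positivity) (by positivity), log_inv]
    ring
  obtain ⟨n, rfl⟩ := Nat.exists_eq_add_one_of_ne_zero hβ.ne'
  have h := ((hasDerivAt_const σ C).sub (hasDerivAt_log hσ.ne')).sub
    (((hasDerivAt_pow (n + 1) σ).inv (pow_ne_zero _ hσ.ne')).const_mul ((x - μ) ^ (n + 1)))
  refine (h.congr_of_eventuallyEq hlog.symm).congr_deriv ?_
  simp only [add_tsub_cancel_right, Nat.cast_add, Nat.cast_one]
  field_simp
  ring

theorem generalized_gaussian_T222
    (β : ℕ) (hβeven : Even β) (hβpos : 0 < β) (μ σ : ℝ) (hσ : 0 < σ) :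
    ∫ x : ℝ, (deriv (fun s => genGaussLogLik β μ s x) σ) ^ 3 * genGaussPdf β μ σ x
      = 2 * (β : ℝ) ^ 2 / σ ^ 3 := by
  set z : ℝ → ℝ := fun x => (x - μ) ^ β / σ ^ β
  set m : ℕ → ℝ := fun k => ∫ x, z x ^ k * genGaussPdf β μ σ x
  have hm (k : ℕ) : m k = Gamma (k + 1 / β) / Gamma (1 / β) :=
    integral_pow_mul_genGaussPdf hβeven hβpos μ hσ k
  have hI (k : ℕ) : Integrable fun x => z x ^ k * genGaussPdf β μ σ x :=
    integrable_pow_mul_genGaussPdf hβeven hβpos μ hσ k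
  have hcube : ∀ x, (deriv (fun s => genGaussLogLik β μ s x) σ) ^ 3 * genGaussPdf β μ σ x
      = (σ ^ 3)⁻¹ * (β ^ 3 * (z x ^ 3 * genGaussPdf β μ σ x)
        - 3 * β ^ 2 * (z x ^ 2 * genGaussPdf β μ σ x) + 3 * β * (z x ^ 1 * genGaussPdf β μ σ x)
        - z x ^ 0 * genGaussPdf β μ σ x) := fun x => by
    rw [(hasDerivAt_genGaussLogLik hβpos μ x hσ).deriv]
    ring
  have hexpect : ∫ x : ℝ, (deriv (fun s => genGaussLogLik β μ s x) σ) ^ 3 * genGaussPdf β μ σ x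
      = (σ ^ 3)⁻¹ * (β ^ 3 * m 3 - 3 * β ^ 2 * m 2 + 3 * β * m 1 - m 0) := by
    simp only [hcube]
    rw [integral_const_mul, integral_sub, integral_add, integral_sub, integral_const_mul,
      integral_const_mul, integral_const_mul]
    all_goals fun_prop
  have ha : (0 : ℝ) < 1 / β := by positivity
  have hΓ : Gamma (1 / β) ≠ 0 := (Gamma_pos_of_pos ha).ne'
  rw [hexpect, hm, hm, hm, hm, Gamma_natCast_succ_add ha 2, Gamma_natCast_succ_add ha 1,
    Gamma_natCast_succ_add ha 0]
  push_cast [zero_add]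
  field_simp
  ring
end
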